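/- The finite-dimensional space F^ε = { f : [0,1] → ℝ : the restriction of f to each I_j is a polynomial of degree ≤ j } is invariant under the operator L^ε f(x) = ∫_0^{min(x+ε,1)} f(t) dt. -/

import Mathlib

/-- `s_j = 1 - jε`. -/
noncomputable def sPt (ε : ℝ) (j : ℕ) : ℝ := 1 - (j : ℝ) * ε

/-- For `M = ⌈1/ε⌉`: `I_j = (s_{j+1}, s_j]` for `j ≤ M-2`, and `I_{M-1} = [0, s_{M-1}]`. -/
noncomputable def Ij (ε : ℝ) (j : ℕ) : Set ℝ :=
  if j = ⌈1 / ε⌉₊ - 1 then Set.Icc 0 (sPt ε (⌈1 / ε⌉₊ - 1))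
  else Set.Ioc (sPt ε (j + 1)) (sPt ε j)

/-- The operator `L^ε f(x) = ∫_0^{min(x+ε,1)} f(t) dt`. -/
noncomputable def Lop (ε : ℝ) (f : ℝ → ℝ) (x : ℝ) : ℝ :=
  ∫ t in (0 : ℝ)..(min (x + ε) 1), f t

/-- Membership in `F^ε`: the restriction of `f` to each `I_j` is a polynomial of
degree at most `j`. -/
def MemFspace (ε : ℝ) (f : ℝ → ℝ) : Prop :=
  ∀ j < ⌈1 / ε⌉₊, ∃ p : Polynomial ℝ, p.natDegree ≤ j ∧ ∀ x ∈ Ij ε j, f x = p.eval x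

/-!
`F^ε` functions are integrable on `[0, 1]`, being polynomial on each of the finitely many `I_j`.
On `I_0` the upper limit `min (x + ε) 1` is `1`, so `L^ε f` is constant there. For `x ∈ I_{j+1}`
we have `s_{j+1} ≤ x + ε ≤ s_j`, so `L^ε f x = ∫_0^{s_{j+1}} f + ∫_{s_{j+1}}^{x+ε} p`, where `p`
is the polynomial of degree `≤ j` representing `f` on `I_j`; the second integral is a polynomial
of degree `≤ j + 1` in `x`.
-/

open Polynomial MeasureTheory Set

theorem Polynomial.exists_natDegree_le_derivative_eq {K : Type*} [Field K] [CharZero K]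
    (p : K[X]) : ∃ q : K[X], q.natDegree ≤ p.natDegree + 1 ∧ derivative q = p := by
  refine ⟨p.sum fun n c => C (c / (n + 1)) * X ^ (n + 1), ?_, ?_⟩
  · refine natDegree_sum_le_of_forall_le _ _ fun i hi => ?_
    have := le_natDegree_of_mem_supp i hi
    exact (natDegree_C_mul_X_pow_le _ _).trans (by omega)
  · conv_rhs => rw [← p.sum_C_mul_X_pow_eq]
    rw [Polynomial.sum, Polynomial.sum, derivative_sum]
    refine Finset.sum_congr rfl fun n _ => ?_
    rw [derivative_C_mul_X_pow]
    push_cast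
    rw [div_mul_cancel₀ _ (Nat.cast_add_one_ne_zero n)]

theorem Polynomial.exists_intervalIntegral_eval_add_eq_eval (p : ℝ[X]) (a c : ℝ) :
    ∃ r : ℝ[X], r.natDegree ≤ p.natDegree + 1 ∧
      ∀ x, ∫ t in a..x + c, p.eval t = r.eval x := by
  obtain ⟨q, hq, rfl⟩ := p.exists_natDegree_le_derivative_eq
  refine ⟨q.comp (X + C c) - C (q.eval a), ?_, fun x => ?_⟩
  · refine (natDegree_sub_le _ _).trans ?_
    simpa [natDegree_comp, natDegree_X_add_C] using hq
  · rw [intervalIntegral.integral_eq_sub_of_hasDerivAt (fun t _ => q.hasDerivAt t)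
      (q.derivative.continuous.intervalIntegrable _ _)]
    simp [eval_comp]

section Partition

variable {ε : ℝ}

theorem sPt_succ (ε : ℝ) (k : ℕ) : sPt ε (k + 1) = sPt ε k - ε := by
  simp only [sPt]; push_cast; ring

theorem sPt_le_one (hε : 0 ≤ ε) (k : ℕ) : sPt ε k ≤ 1 := by
  simp only [sPt]; nlinarith [k.cast_nonneg (α := ℝ)]

theorem sPt_pos (hε : 0 < ε) {k : ℕ} (hk : k < ⌈1 / ε⌉₊) : 0 < sPt ε k := by
  have h := Nat.lt_ceil.mp hk
  rw [lt_div_iff₀ hε] at h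
  simp only [sPt]; linarith

theorem sPt_ceil_nonpos (hε : 0 < ε) : sPt ε ⌈1 / ε⌉₊ ≤ 0 := by
  have h := Nat.le_ceil (1 / ε)
  rw [div_le_iff₀ hε] at h
  simp only [sPt]; linarith

theorem two_le_ceil_one_div (hε : ε ∈ Ioo 0 1) : 2 ≤ ⌈1 / ε⌉₊ := by
  have h : (1 : ℝ) < 1 / ε := by rw [lt_div_iff₀ hε.1]; linarith [hε.2]
  have := Nat.lt_ceil.mpr (by exact_mod_cast h : ((1 : ℕ) : ℝ) < 1 / ε)
  omega

theorem Ij_of_ne {j : ℕ} (hj : j ≠ ⌈1 / ε⌉₊ - 1) : Ij ε j = Ioc (sPt ε (j + 1)) (sPt ε j) := by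
  rw [Ij, if_neg hj]

theorem Ij_last : Ij ε (⌈1 / ε⌉₊ - 1) = Icc 0 (sPt ε (⌈1 / ε⌉₊ - 1)) := by
  rw [Ij, if_pos rfl]

theorem measurableSet_Ij (ε : ℝ) (j : ℕ) : MeasurableSet (Ij ε j) := by
  unfold Ij; split_ifs
  exacts [measurableSet_Icc, measurableSet_Ioc]

theorem Ij_subset_Icc (hε : 0 < ε) {j : ℕ} (hj : j < ⌈1 / ε⌉₊) :
    Ij ε j ⊆ Icc (sPt ε (j + 1)) (sPt ε j) := by
  by_cases hlast : j = ⌈1 / ε⌉₊ - 1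
  · have hs : sPt ε (j + 1) ≤ 0 := by
      rw [show j + 1 = ⌈1 / ε⌉₊ by omega]; exact sPt_ceil_nonpos hε
    rw [hlast, Ij_last, ← hlast]
    exact Icc_subset_Icc_left hs
  · rw [Ij_of_ne hlast]; exact Ioc_subset_Icc_self

theorem Icc_subset_biUnion_Ij (hε : 0 < ε) :
    Icc 0 1 ⊆ ⋃ j ∈ Finset.range ⌈1 / ε⌉₊, Ij ε j := by
  intro x ⟨hx0, hx1⟩
  set M := ⌈1 / ε⌉₊
  have hM : 0 < M := Nat.ceil_pos.mpr (by positivity)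
  set k := ⌊(1 - x) / ε⌋₊
  have hk : (k : ℝ) * ε ≤ 1 - x :=
    (le_div_iff₀ hε).mp (Nat.floor_le (div_nonneg (by linarith) hε.le))
  simp only [mem_iUnion, Finset.mem_range, exists_prop]
  by_cases hkM : k < M - 1
  · refine ⟨k, by omega, ?_⟩
    rw [Ij_of_ne (by omega)]
    have hk1 : 1 - x < (k + 1) * ε := (div_lt_iff₀ hε).mp (Nat.lt_floor_add_one _)
    constructor <;> simp only [sPt] <;> push_cast <;> linarith
  · refine ⟨M - 1, by omega, ?_⟩
    rw [Ij_last]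
    have : ((M - 1 : ℕ) : ℝ) * ε ≤ k * ε := by gcongr; exact_mod_cast (not_lt.mp hkM)
    exact ⟨hx0, by simp only [sPt]; linarith⟩

end Partition

theorem MemFspace.integrableOn_Icc {ε : ℝ} {f : ℝ → ℝ} (hε : 0 < ε) (hf : MemFspace ε f) :
    IntegrableOn f (Icc 0 1) := by
  refine IntegrableOn.mono_set ?_ (Icc_subset_biUnion_Ij hε)
  refine integrableOn_finset_iUnion.mpr fun j hj => ?_
  obtain ⟨p, -, hp⟩ := hf j (Finset.mem_range.mp hj)
  have hpoly : IntegrableOn (fun x => p.eval x) (Ij ε j) :=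
    (p.continuous.continuousOn.integrableOn_Icc).mono_set
      (Ij_subset_Icc hε (Finset.mem_range.mp hj))
  exact hpoly.congr_fun (fun x hx => (hp x hx).symm) (measurableSet_Ij ε j)

theorem Lop_eq_of_mem_Ij_zero {ε x : ℝ} {f : ℝ → ℝ} (hε : ε ∈ Ioo 0 1) (hx : x ∈ Ij ε 0) :
    Lop ε f x = ∫ t in (0 : ℝ)..1, f t := by
  have hM := two_le_ceil_one_div hε
  rw [Ij_of_ne (by omega)] at hx
  have : 1 - ε < x := by simpa [sPt] using hx.1
  rw [Lop, min_eq_right (by linarith)]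

theorem Lop_eq_of_mem_Ij_succ {ε x : ℝ} {f g : ℝ → ℝ} {j : ℕ} (hε : 0 < ε)
    (hf : IntegrableOn f (Icc 0 1)) (hj : j + 1 < ⌈1 / ε⌉₊) (hfg : EqOn f g (Ij ε j))
    (hx : x ∈ Ij ε (j + 1)) :
    Lop ε f x = (∫ t in (0 : ℝ)..sPt ε (j + 1), f t) + ∫ t in sPt ε (j + 1)..x + ε, g t := by
  obtain ⟨hx_lo, hx_hi⟩ := Ij_subset_Icc hε hj hx
  have hs_pos := sPt_pos hε hj
  have hs_le := sPt_le_one hε.le j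
  have hs_succ := sPt_succ ε j
  have hs_succ' := sPt_succ ε (j + 1)
  have hint : ∀ a b, a ∈ Icc (0 : ℝ) 1 → b ∈ Icc (0 : ℝ) 1 → IntervalIntegrable f volume a b :=
    fun a b ha hb => (hf.mono_set (uIcc_subset_Icc ha hb)).intervalIntegrable
  rw [Lop, min_eq_left (by linarith), ← intervalIntegral.integral_add_adjacent_intervals
    (hint 0 _ ⟨le_rfl, zero_le_one⟩ ⟨hs_pos.le, by linarith⟩)
    (hint _ (x + ε) ⟨hs_pos.le, by linarith⟩ ⟨by linarith, by linarith⟩)]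
  refine congrArg _ (intervalIntegral.integral_congr_Ioo_of_le (by linarith) fun t ht => hfg ?_)
  rw [Ij_of_ne (by omega)]
  exact ⟨ht.1, by linarith [ht.2]⟩

/-- The space `F^ε` of piecewise polynomials (degree `≤ j` on `I_j`) is invariant
under `L^ε`. -/
theorem Fspace_invariant (ε : ℝ) (hε : ε ∈ Set.Ioo (0 : ℝ) 1) (f : ℝ → ℝ)
    (hf : MemFspace ε f) : MemFspace ε (Lop ε f) := by
  have hf_int := hf.integrableOn_Icc hε.1
  rintro (_ | j) hj
  · exact ⟨C (∫ t in (0 : ℝ)..1, f t), by simp, fun x hx => by simp [Lop_eq_of_mem_Ij_zero hε hx]⟩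
  · obtain ⟨p, hpdeg, hp⟩ := hf j (by omega)
    obtain ⟨r, hrdeg, hr⟩ := p.exists_intervalIntegral_eval_add_eq_eval (sPt ε (j + 1)) ε
    refine ⟨C (∫ t in (0 : ℝ)..sPt ε (j + 1), f t) + r, ?_, fun x hx => ?_⟩
    · exact (natDegree_add_le _ _).trans (by simp; omega)
    · rw [Lop_eq_of_mem_Ij_succ hε.1 hf_int hj hp hx, hr, eval_add, eval_C]
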